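/- Let $a, b, m, M \geq 0$ and $\epsilon, \delta \in (0,1)$ with $\delta = \frac{\epsilon p^{2/\epsilon + 2}}{4}$ for some $p \in (0,1]$. Suppose $a \geq (1-\delta) M$, $b > (1+\epsilon) M$, and let $k \geq b - a - \frac{\epsilon a}{2}$ with $a \leq M$. Then $a + p^{2/\epsilon+2} \cdot k > M$. -/
import Mathlib


theorem stmt_16 (a b k M ε p δ : ℝ) (ha : 0 ≤ a) (hb : 0 ≤ b) (hk : 0 ≤ k)
    (hM : 0 ≤ M) (hε : ε ∈ Set.Ioo (0:ℝ) 1) (hp : p ∈ Set.Ioc (0:ℝ) 1)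
    (hδ : δ = ε * p ^ (2 / ε + 2) / 4) (hδmem : δ ∈ Set.Ioo (0:ℝ) 1)
    (h1 : a ≥ (1 - δ) * M) (h2 : b > (1 + ε) * M)
    (h3 : k ≥ b - a - ε * a / 2) (h4 : a ≤ M) :
    a + p ^ (2 / ε + 2) * k > M := by
  obtain ⟨hε0, hε1⟩ := hε
  have hq : 0 < p ^ (2 / ε + 2) := Real.rpow_pos_of_pos hp.1 _
  set q := p ^ (2 / ε + 2) with hqdef
  have hkey : 0 < k - ((1 + ε) * M - a - ε * a / 2) := by linarith
  nlinarith [mul_pos hq hkey,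
    mul_nonneg (mul_nonneg hq.le (by linarith : (0:ℝ) ≤ 1 + ε / 2)) (by linarith : 0 ≤ M - a),
    hδmem.1, hδmem.2]
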